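/- Let ε > 0 and suppose y_ε ≥ 0 minimizes Iᵉ(y) = b·y + (1/(2ε))‖Aᵀy − c‖² over {y ≥ 0}. Then with x_ε := (1/ε)(c − Aᵀ y_ε) one has min_{y ≥ 0} Iᵉ(y) = max_{Ax ≤ b} Jᵉ(x), where Jᵉ(x) = c·x − (ε/2)‖x‖², and the maximum on the right is attained at x_ε. -/

import Mathlib

/-!
The gradient of `Iᵉ` at `y` is `b - A x` with `x = (1/ε)(c - Aᵀ y)`, so minimality of `yε` over
the orthant gives the complementarity conditions `b - A xε ≥ 0` and `(b - A xε) ⬝ᵥ yε = 0`.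
The identity `Iᵉ(y) - Jᵉ(x) = (b - A x) ⬝ᵥ y + (1/(2ε))‖Aᵀ y - c + ε x‖²` then gives weak
duality `Jᵉ(x) ≤ Iᵉ(y)` for feasible pairs, and a zero gap at `(yε, xε)`.
-/

open Matrix Set Filter Topology

variable {ι κ : Type*} [Fintype ι]

lemma nonneg_of_forall_nonneg_mul_add_mul_sq {α β : ℝ}
    (h : ∀ t ∈ Ioc (0 : ℝ) 1, 0 ≤ α * t + β * t ^ 2) : 0 ≤ α := by
  have hlim : Tendsto (fun t => α + β * t) (𝓝[>] 0) (𝓝 α) := by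
    have : Continuous fun t : ℝ => α + β * t := by fun_prop
    simpa using (this.tendsto 0).mono_left nhdsWithin_le_nhds
  refine ge_of_tendsto hlim (eventually_of_mem (Ioc_mem_nhdsGT zero_lt_one) fun t ht => ?_)
  exact nonneg_of_mul_nonneg_right (by linarith [h t ht]) ht.1

lemma nonneg_and_dotProduct_eq_zero_of_forall_dotProduct_sub_nonneg [DecidableEq ι]
    {g y : ι → ℝ} (hy : 0 ≤ y) (h : ∀ z, 0 ≤ z → 0 ≤ g ⬝ᵥ (z - y)) :
    0 ≤ g ∧ g ⬝ᵥ y = 0 := by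
  have hg : 0 ≤ g := fun i => by
    simpa using h (y + Pi.single i 1) (add_nonneg hy (Pi.single_nonneg.2 zero_le_one))
  refine ⟨hg, le_antisymm ?_ (dotProduct_nonneg_of_nonneg hg hy)⟩
  simpa using h 0 le_rfl

lemma Matrix.mulVec_dotProduct_eq_dotProduct_transpose_mulVec {R : Type*} [CommSemiring R]
    [Fintype κ] (A : Matrix ι κ R) (x : κ → R) (y : ι → R) : (A *ᵥ x) ⬝ᵥ y = x ⬝ᵥ (Aᵀ *ᵥ y) := by
  rw [dotProduct_comm, dotProduct_transpose_mulVec]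

namespace PenalizedLP

variable {A : Matrix ι κ ℝ} {b : ι → ℝ} {c : κ → ℝ} {ε : ℝ}

noncomputable def dualPoint (A : Matrix ι κ ℝ) (c : κ → ℝ) (ε : ℝ) (y : ι → ℝ) : κ → ℝ :=
  (1 / ε) • (c - Aᵀ *ᵥ y)

lemma residual_dualPoint (hε : ε ≠ 0) (y : ι → ℝ) :
    Aᵀ *ᵥ y - c + ε • dualPoint A c ε y = 0 := by
  rw [dualPoint, smul_smul, mul_one_div_cancel hε, one_smul]
  abel

variable [Fintype κ]

noncomputable def primal (A : Matrix ι κ ℝ) (b : ι → ℝ) (c : κ → ℝ) (ε : ℝ) (y : ι → ℝ) : ℝ :=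
  b ⬝ᵥ y + (1 / (2 * ε)) * ((Aᵀ *ᵥ y - c) ⬝ᵥ (Aᵀ *ᵥ y - c))

noncomputable def dual (c : κ → ℝ) (ε : ℝ) (x : κ → ℝ) : ℝ :=
  c ⬝ᵥ x - (ε / 2) * (x ⬝ᵥ x)

lemma primal_sub_dual (hε : ε ≠ 0) (y : ι → ℝ) (x : κ → ℝ) :
    primal A b c ε y - dual c ε x =
      (b - A *ᵥ x) ⬝ᵥ y + (1 / (2 * ε)) * ((Aᵀ *ᵥ y - c + ε • x) ⬝ᵥ (Aᵀ *ᵥ y - c + ε • x)) := by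
  simp only [primal, dual, sub_dotProduct, add_dotProduct, dotProduct_add, dotProduct_sub,
    smul_dotProduct, dotProduct_smul, smul_eq_mul, mulVec_dotProduct_eq_dotProduct_transpose_mulVec,
    dotProduct_comm (Aᵀ *ᵥ y) x, dotProduct_comm x c]
  field_simp
  ring

lemma dual_le_primal (hε : 0 < ε) {y : ι → ℝ} {x : κ → ℝ} (hy : 0 ≤ y) (hx : A *ᵥ x ≤ b) :
    dual c ε x ≤ primal A b c ε y := by
  have hslack : 0 ≤ (b - A *ᵥ x) ⬝ᵥ y := dotProduct_nonneg_of_nonneg (sub_nonneg.2 hx) hy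
  have hsq (v : κ → ℝ) : 0 ≤ v ⬝ᵥ v := Finset.sum_nonneg fun i _ => mul_self_nonneg (v i)
  rw [← sub_nonneg, primal_sub_dual hε.ne']
  exact add_nonneg hslack (mul_nonneg (by positivity) (hsq _))

lemma primal_add_smul (y d : ι → ℝ) (t : ℝ) :
    primal A b c ε (y + t • d) = primal A b c ε y +
      ((b - A *ᵥ dualPoint A c ε y) ⬝ᵥ d) * t +
        ((1 / (2 * ε)) * ((Aᵀ *ᵥ d) ⬝ᵥ (Aᵀ *ᵥ d))) * t ^ 2 := by
  simp only [primal, dualPoint, mulVec_add, mulVec_smul, mulVec_sub, sub_dotProduct,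
    add_dotProduct, dotProduct_add, dotProduct_sub, smul_dotProduct, dotProduct_smul,
    smul_eq_mul, mulVec_dotProduct_eq_dotProduct_transpose_mulVec, dotProduct_comm (Aᵀ *ᵥ d)]
  ring

lemma dotProduct_sub_nonneg_of_isMinOn {y z : ι → ℝ}
    (hmin : IsMinOn (primal A b c ε) (Ici 0) y) (hy : 0 ≤ y) (hz : 0 ≤ z) :
    0 ≤ (b - A *ᵥ dualPoint A c ε y) ⬝ᵥ (z - y) := by
  refine nonneg_of_forall_nonneg_mul_add_mul_sq
    (β := (1 / (2 * ε)) * ((Aᵀ *ᵥ (z - y)) ⬝ᵥ (Aᵀ *ᵥ (z - y)))) fun t ht => ?_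
  have hmem : y + t • (z - y) ∈ Ici 0 :=
    (convex_Ici 0).add_smul_sub_mem hy hz (Ioc_subset_Icc_self ht)
  have hle := hmin hmem
  rw [mem_ofPred_eq, primal_add_smul] at hle
  linarith

lemma complementarity_of_isMinOn [DecidableEq ι] {y : ι → ℝ}
    (hmin : IsMinOn (primal A b c ε) (Ici 0) y) (hy : 0 ≤ y) :
    0 ≤ b - A *ᵥ dualPoint A c ε y ∧ (b - A *ᵥ dualPoint A c ε y) ⬝ᵥ y = 0 :=
  nonneg_and_dotProduct_eq_zero_of_forall_dotProduct_sub_nonneg hy fun _ hz =>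
    dotProduct_sub_nonneg_of_isMinOn hmin hy hz

end PenalizedLP

open PenalizedLP in
theorem penalized_strong_duality (m n : ℕ) (A : Matrix (Fin m) (Fin n) ℝ)
    (b : Fin m → ℝ) (c : Fin n → ℝ) (ε : ℝ) (hε : 0 < ε)
    (yε : Fin m → ℝ) (hy : ∀ i, 0 ≤ yε i)
    (hmin : ∀ y : Fin m → ℝ, (∀ i, 0 ≤ y i) →
      b ⬝ᵥ yε + (1 / (2 * ε)) * ((Aᵀ.mulVec yε - c) ⬝ᵥ (Aᵀ.mulVec yε - c)) ≤
        b ⬝ᵥ y + (1 / (2 * ε)) * ((Aᵀ.mulVec y - c) ⬝ᵥ (Aᵀ.mulVec y - c))) :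
    (∀ i, A.mulVec ((1 / ε) • (c - Aᵀ.mulVec yε)) i ≤ b i) ∧
      (b ⬝ᵥ yε + (1 / (2 * ε)) * ((Aᵀ.mulVec yε - c) ⬝ᵥ (Aᵀ.mulVec yε - c)) =
        c ⬝ᵥ ((1 / ε) • (c - Aᵀ.mulVec yε)) -
          (ε / 2) * (((1 / ε) • (c - Aᵀ.mulVec yε)) ⬝ᵥ ((1 / ε) • (c - Aᵀ.mulVec yε)))) ∧
      (∀ x : Fin n → ℝ, (∀ i, A.mulVec x i ≤ b i) →
        c ⬝ᵥ x - (ε / 2) * (x ⬝ᵥ x) ≤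
          c ⬝ᵥ ((1 / ε) • (c - Aᵀ.mulVec yε)) -
            (ε / 2) * (((1 / ε) • (c - Aᵀ.mulVec yε)) ⬝ᵥ ((1 / ε) • (c - Aᵀ.mulVec yε)))) := by
  obtain ⟨hfeas, hslack⟩ := complementarity_of_isMinOn hmin hy
  have hgap : primal A b c ε yε = dual c ε (dualPoint A c ε yε) := by
    rw [← sub_eq_zero, primal_sub_dual hε.ne', hslack, residual_dualPoint hε.ne']
    simp
  exact ⟨fun i => sub_nonneg.1 (hfeas i), hgap,
    fun x hx => (dual_le_primal hε hy hx).trans_eq hgap⟩
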